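/- (Theorem 1(v), boundary-clearance guarantee) Let 0 ≤ d_{b,min} < d̂_b. Along any solution of the closed-loop multi-sUAS system whose initial Hamiltonian satisfies H(t₀) = c < ψ_b(d_{b,min}), every agent maintains more than the minimum boundary clearance: d_{in}(t) > d_{b,min} for all t ≥ t₀, all agents i, and all boundary planes n = 1,…,m. -/

import Mathlib

open Finset RealInnerProductSpace

/-!
`H` is a Lyapunov function of the closed loop: the control is minus the gradient of
`V_p + V_b` plus damping, the pairwise forces cancel in total (Newton's third law) and the
boundary forces are normal to `v̂`, so `dH/dt = -∑ᵢ Kᵢ ‖q̇ᵢ - v̂‖² ≤ 0`. Since every term of `H`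
is nonnegative, `ψ_b(d_{in}(t)) ≤ H(t) ≤ c < ψ_b(d_{b,min})`, and `ψ_b` is antitone.
-/

lemma hasDerivAt_of_contDiff_one {f f' : ℝ → ℝ} (hf : ContDiff ℝ 1 f) (hf' : deriv f = f')
    (x : ℝ) : HasDerivAt f (f' x) x :=
  hf' ▸ (hf.differentiable one_ne_zero x).hasDerivAt

lemma Finset.sum_sum_erase_comm {ι M : Type*} [Fintype ι] [DecidableEq ι] [AddCommMonoid M]
    (f : ι → ι → M) :
    ∑ i, ∑ j ∈ univ.erase i, f i j = ∑ i, ∑ j ∈ univ.erase i, f j i :=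
  Finset.sum_comm' fun _ _ => by simp [ne_comm]

section ClosedLoop

variable {E : Type*} [NormedAddCommGroup E]

noncomputable def sigmaNorm (ε : ℝ) (z : E) : ℝ :=
  (1 / ε) * (Real.sqrt (1 + ε * ‖z‖ ^ 2) - 1)

/-- `pairWeight φ ε z • z` is the gradient of `z ↦ ψ ‖z‖_σ` when `ψ' = φ`. -/
noncomputable def pairWeight (φ : ℝ → ℝ) (ε : ℝ) (z : E) : ℝ :=
  φ (sigmaNorm ε z) * (Real.sqrt (1 + ε * ‖z‖ ^ 2))⁻¹

lemma pairWeight_neg (φ : ℝ → ℝ) (ε : ℝ) (z : E) : pairWeight φ ε (-z) = pairWeight φ ε z := by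
  simp only [pairWeight, sigmaNorm, norm_neg]

variable [InnerProductSpace ℝ E]

lemma hasDerivAt_sigmaNorm {ε : ℝ} (hε : 0 < ε) {x : ℝ → E} {x' : E} {t : ℝ}
    (hx : HasDerivAt x x' t) :
    HasDerivAt (fun s => sigmaNorm ε (x s))
      ((Real.sqrt (1 + ε * ‖x t‖ ^ 2))⁻¹ * ⟪x t, x'⟫) t := by
  have hpos : 0 < 1 + ε * ‖x t‖ ^ 2 := by positivity
  have hnorm : HasDerivAt (fun s => ‖x s‖ ^ 2) (2 * ⟪x t, x'⟫) t := by
    simpa only [real_inner_self_eq_norm_sq, real_inner_comm x', two_mul] using hx.inner ℝ hx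
  have hsqrt := ((Real.hasDerivAt_sqrt hpos.ne').comp t
    ((hnorm.const_mul ε).const_add 1)).sub_const 1 |>.const_mul (1 / ε)
  refine hsqrt.congr_deriv ?_
  field_simp

variable {κ : Type*} [Fintype κ]

def boundaryGradient (φb : ℝ → ℝ) (A : κ → E) (b : κ → ℝ) (p : E) : E :=
  ∑ n, φb (⟪A n, p⟫ - b n) • A n

lemma inner_boundaryGradient_eq_zero (φb : ℝ → ℝ) {A : κ → E} (b : κ → ℝ) (p : E) {vhat : E}
    (hvhat : ∀ n, ⟪A n, vhat⟫ = 0) : ⟪boundaryGradient φb A b p, vhat⟫ = 0 := by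
  simp [boundaryGradient, sum_inner, real_inner_smul_left, hvhat]

variable {ι : Type*} [Fintype ι]

noncomputable def kineticEnergy (vhat : E) (v : ι → E) : ℝ :=
  (1 / 2) * ∑ i, ‖v i - vhat‖ ^ 2

def boundaryPotential (ψb : ℝ → ℝ) (A : κ → E) (b : κ → ℝ) (x : ι → E) : ℝ :=
  ∑ i, ∑ n, ψb (⟪A n, x i⟫ - b n)

lemma hasDerivAt_kineticEnergy {vhat : E} {v : ι → ℝ → E} {v' : ι → E} {t : ℝ}
    (hv : ∀ i, HasDerivAt (v i) (v' i) t) :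
    HasDerivAt (fun s => kineticEnergy vhat (fun i => v i s))
      (∑ i, ⟪v i t - vhat, v' i⟫) t := by
  have hsq : ∀ i, HasDerivAt (fun s => ‖v i s - vhat‖ ^ 2) (2 * ⟪v i t - vhat, v' i⟫) t := by
    intro i
    have hw := (hv i).sub_const vhat
    simpa only [real_inner_self_eq_norm_sq, real_inner_comm (v' i), two_mul] using hw.inner ℝ hw
  refine (HasDerivAt.fun_sum fun i _ => hsq i).const_mul (1 / 2) |>.congr_deriv ?_
  rw [Finset.mul_sum]
  exact Finset.sum_congr rfl fun i _ => by ring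

lemma hasDerivAt_boundaryPotential {ψb φb : ℝ → ℝ} (hψb : ∀ r, HasDerivAt ψb (φb r) r)
    {A : κ → E} {b : κ → ℝ} {x : ι → ℝ → E} {x' : ι → E} {t : ℝ}
    (hx : ∀ i, HasDerivAt (x i) (x' i) t) :
    HasDerivAt (fun s => boundaryPotential ψb A b (fun i => x i s))
      (∑ i, ⟪boundaryGradient φb A b (x i t), x' i⟫) t := by
  simp only [boundaryGradient, sum_inner, real_inner_smul_left]
  refine .fun_sum fun i _ => .fun_sum fun n _ => (hψb _).comp t ?_
  simpa using ((hasDerivAt_const t (A n)).inner ℝ (hx i)).sub_const (b n)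

variable [DecidableEq ι]

noncomputable def pairGradient (φ : ℝ → ℝ) (ε : ℝ) (x : ι → E) (i : ι) : E :=
  ∑ j ∈ univ.erase i, pairWeight φ ε (x i - x j) • (x i - x j)

noncomputable def pairPotential (ψ : ℝ → ℝ) (ε : ℝ) (x : ι → E) : ℝ :=
  (1 / 2) * ∑ i, ∑ j ∈ univ.erase i, ψ (sigmaNorm ε (x i - x j))

noncomputable def hamiltonian (ε : ℝ) (ψ ψb : ℝ → ℝ) (A : κ → E) (b : κ → ℝ) (vhat : E)
    (x v : ι → E) : ℝ :=
  pairPotential ψ ε x + kineticEnergy vhat v + boundaryPotential ψb A b x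

lemma sum_pairGradient_eq_zero (φ : ℝ → ℝ) (ε : ℝ) (x : ι → E) :
    ∑ i, pairGradient φ ε x i = 0 := by
  have hanti : ∑ i, pairGradient φ ε x i = -∑ i, pairGradient φ ε x i :=
    calc ∑ i, pairGradient φ ε x i
        = ∑ i, ∑ j ∈ univ.erase i, pairWeight φ ε (x j - x i) • (x j - x i) :=
          Finset.sum_sum_erase_comm _
      _ = -∑ i, pairGradient φ ε x i := by
          simp only [pairGradient, ← Finset.sum_neg_distrib]
          refine Finset.sum_congr rfl fun i _ => Finset.sum_congr rfl fun j _ => ?_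
          rw [← neg_sub (x i) (x j), pairWeight_neg, smul_neg]
  have htwice : (2 : ℝ) • ∑ i, pairGradient φ ε x i = 0 := by
    rw [two_smul]
    exact add_eq_zero_iff_eq_neg.mpr hanti
  exact (smul_eq_zero.mp htwice).resolve_left two_ne_zero

lemma sum_inner_pairGradient (φ : ℝ → ℝ) (ε : ℝ) (x y : ι → E) :
    ∑ i, ⟪pairGradient φ ε x i, y i⟫ =
      (1 / 2) * ∑ i, ∑ j ∈ univ.erase i, pairWeight φ ε (x i - x j) * ⟪x i - x j, y i - y j⟫ := by
  simp only [pairGradient, sum_inner, real_inner_smul_left]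
  have hswap : ∑ i, ∑ j ∈ univ.erase i, pairWeight φ ε (x i - x j) * ⟪x i - x j, y j⟫ =
      -∑ i, ∑ j ∈ univ.erase i, pairWeight φ ε (x i - x j) * ⟪x i - x j, y i⟫ := by
    rw [Finset.sum_sum_erase_comm]
    simp only [← Finset.sum_neg_distrib]
    refine Finset.sum_congr rfl fun i _ => Finset.sum_congr rfl fun j _ => ?_
    rw [← neg_sub (x i) (x j), pairWeight_neg, inner_neg_left, mul_neg]
  simp only [inner_sub_right, mul_sub, Finset.sum_sub_distrib, hswap]
  ring

lemma hasDerivAt_pairPotential {ε : ℝ} (hε : 0 < ε) {ψ φ : ℝ → ℝ}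
    (hψ : ∀ r, HasDerivAt ψ (φ r) r) {x : ι → ℝ → E} {x' : ι → E} {t : ℝ}
    (hx : ∀ i, HasDerivAt (x i) (x' i) t) :
    HasDerivAt (fun s => pairPotential ψ ε (fun i => x i s))
      (∑ i, ⟪pairGradient φ ε (fun i => x i t) i, x' i⟫) t := by
  rw [sum_inner_pairGradient]
  refine .const_mul _ (.fun_sum fun i _ => .fun_sum fun j _ => ?_)
  rw [pairWeight, mul_assoc]
  exact (hψ _).comp t (hasDerivAt_sigmaNorm hε ((hx i).sub (hx j)))

variable {ε : ℝ} {ψ ψb φ φb : ℝ → ℝ} {A : κ → E} {b : κ → ℝ} {vhat : E} {K : ι → ℝ}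
  {q qv : ι → ℝ → E}

lemma hasDerivAt_hamiltonian (hε : 0 < ε) (hψ : ∀ r, HasDerivAt ψ (φ r) r)
    (hψb : ∀ r, HasDerivAt ψb (φb r) r) (hvhat : ∀ n, ⟪A n, vhat⟫ = 0)
    (hq : ∀ i t, HasDerivAt (q i) (qv i t) t)
    (hqv : ∀ i t, HasDerivAt (qv i) (-pairGradient φ ε (fun j => q j t) i
      - boundaryGradient φb A b (q i t) - K i • (qv i t - vhat)) t) (t : ℝ) :
    HasDerivAt (fun s => hamiltonian ε ψ ψb A b vhat (fun i => q i s) (fun i => qv i s))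
      (-∑ i, K i * ‖qv i t - vhat‖ ^ 2) t := by
  set g := pairGradient φ ε (fun j => q j t)
  set gb := fun i => boundaryGradient φb A b (q i t)
  have hpower : ∀ i, ⟪g i, qv i t⟫ + ⟪qv i t - vhat, -g i - gb i - K i • (qv i t - vhat)⟫
      + ⟪gb i, qv i t⟫ = ⟪g i, vhat⟫ + ⟪gb i, vhat⟫ - K i * ‖qv i t - vhat‖ ^ 2 := by
    intro i
    simp only [inner_sub_left, inner_sub_right, inner_neg_right, real_inner_smul_right,
      real_inner_self_eq_norm_sq, real_inner_comm (g i), real_inner_comm (gb i)]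
    rw [norm_sub_sq_real, real_inner_comm (qv i t) vhat]
    ring
  refine (((hasDerivAt_pairPotential hε hψ (hq · t)).add
    (hasDerivAt_kineticEnergy (hqv · t))).add
    (hasDerivAt_boundaryPotential hψb (hq · t))).congr_deriv ?_
  rw [← Finset.sum_add_distrib, ← Finset.sum_add_distrib, Finset.sum_congr rfl fun i _ => hpower i,
    Finset.sum_sub_distrib, Finset.sum_add_distrib, ← sum_inner, sum_pairGradient_eq_zero]
  simp [gb, inner_boundaryGradient_eq_zero φb b _ hvhat]

lemma hamiltonian_antitone (hε : 0 < ε) (hψ : ∀ r, HasDerivAt ψ (φ r) r)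
    (hψb : ∀ r, HasDerivAt ψb (φb r) r) (hvhat : ∀ n, ⟪A n, vhat⟫ = 0) (hK : ∀ i, 0 ≤ K i)
    (hq : ∀ i t, HasDerivAt (q i) (qv i t) t)
    (hqv : ∀ i t, HasDerivAt (qv i) (-pairGradient φ ε (fun j => q j t) i
      - boundaryGradient φb A b (q i t) - K i • (qv i t - vhat)) t) :
    Antitone fun t => hamiltonian ε ψ ψb A b vhat (fun i => q i t) (fun i => qv i t) :=
  antitone_of_hasDerivAt_nonpos (hasDerivAt_hamiltonian hε hψ hψb hvhat hq hqv) fun _ =>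
    neg_nonpos.mpr (Finset.sum_nonneg fun i _ => mul_nonneg (hK i) (sq_nonneg _))

lemma boundaryTerm_le_hamiltonian (hψ : ∀ r, 0 ≤ ψ r) (hψb : ∀ r, 0 ≤ ψb r) (x v : ι → E)
    (i : ι) (n : κ) : ψb (⟪A n, x i⟫ - b n) ≤ hamiltonian ε ψ ψb A b vhat x v := by
  have hVp : 0 ≤ pairPotential ψ ε x :=
    mul_nonneg one_half_pos.le (Finset.sum_nonneg fun _ _ => Finset.sum_nonneg fun _ _ => hψ _)
  have hVk : 0 ≤ kineticEnergy vhat v :=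
    mul_nonneg one_half_pos.le (Finset.sum_nonneg fun _ _ => sq_nonneg _)
  have hVb : ψb (⟪A n, x i⟫ - b n) ≤ boundaryPotential ψb A b x :=
    calc ψb (⟪A n, x i⟫ - b n) ≤ ∑ n', ψb (⟪A n', x i⟫ - b n') :=
          Finset.single_le_sum (f := fun n' => ψb (⟪A n', x i⟫ - b n')) (fun _ _ => hψb _)
            (Finset.mem_univ n)
      _ ≤ boundaryPotential ψb A b x :=
          Finset.single_le_sum (f := fun i => ∑ n', ψb (⟪A n', x i⟫ - b n'))
            (fun _ _ => Finset.sum_nonneg fun _ _ => hψb _) (Finset.mem_univ i)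
  unfold hamiltonian
  linarith

end ClosedLoop

theorem boundary_clearance_guarantee_general
    (N m : ℕ) (ε : ℝ) (hε : 0 < ε)
    -- agent positions and velocities
    (q qv : Fin N → ℝ → EuclideanSpace ℝ (Fin 3))
    -- boundary planes
    (A : Fin m → EuclideanSpace ℝ (Fin 3)) (b : Fin m → ℝ)
    -- reference velocity, parallel to every boundary plane
    (vhat : EuclideanSpace ℝ (Fin 3)) (hvhat : ∀ n, ⟪A n, vhat⟫ = 0)
    -- potential functions
    (ψ ψb φ φb : ℝ → ℝ)
    (hψnn : ∀ d, 0 ≤ ψ d)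
    (hψC1 : ContDiff ℝ 1 ψ) (hφ : deriv ψ = φ)
    (hψbnn : ∀ d, 0 ≤ ψb d) (hψbanti : Antitone ψb)
    (hψbC1 : ContDiff ℝ 1 ψb) (hφb : deriv ψb = φb)
    -- damping gains
    (K : Fin N → ℝ) (hK : ∀ i, 0 < K i)
    -- closed-loop double-integrator dynamics  q̈ᵢ = uᵢ
    (hq : ∀ i t, HasDerivAt (q i) (qv i t) t)
    (hqv : ∀ i t, HasDerivAt (qv i)
      (-(∑ j ∈ univ.erase i,
          (φ ((1 / ε) * (Real.sqrt (1 + ε * ‖q i t - q j t‖ ^ 2) - 1)) *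
            (Real.sqrt (1 + ε * ‖q i t - q j t‖ ^ 2))⁻¹) • (q i t - q j t))
        - (∑ n, φb (⟪A n, q i t⟫ - b n) • A n)
        - K i • (qv i t - vhat)) t)
    -- the Hamiltonian  H = V_p + V_k + V_b
    (t₀ : ℝ) (H : ℝ → ℝ)
    (hH : ∀ t, H t =
      (1 / 2) * ∑ i, ∑ j ∈ univ.erase i,
          ψ ((1 / ε) * (Real.sqrt (1 + ε * ‖q i t - q j t‖ ^ 2) - 1))
      + (1 / 2) * ∑ i, ‖qv i t - vhat‖ ^ 2
      + ∑ i, ∑ n, ψb (⟪A n, q i t⟫ - b n))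
    -- minimum boundary clearance and initial-energy sublevel condition
    (dbmin c : ℝ)
    (hc : H t₀ = c) (hcs : c < ψb dbmin) :
    ∀ t, t₀ ≤ t → ∀ i : Fin N, ∀ n : Fin m, dbmin < ⟪A n, q i t⟫ - b n := by
  intro t ht i n
  have hdecay := hamiltonian_antitone hε (hasDerivAt_of_contDiff_one hψC1 hφ)
    (hasDerivAt_of_contDiff_one hψbC1 hφb) hvhat (fun j => (hK j).le) hq hqv
  have hbound : ψb (⟪A n, q i t⟫ - b n) < ψb dbmin :=
    calc ψb (⟪A n, q i t⟫ - b n)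
        ≤ hamiltonian ε ψ ψb A b vhat (fun j => q j t) (fun j => qv j t) :=
          boundaryTerm_le_hamiltonian hψnn hψbnn (fun j => q j t) (fun j => qv j t) i n
      _ ≤ hamiltonian ε ψ ψb A b vhat (fun j => q j t₀) (fun j => qv j t₀) := hdecay ht
      _ = H t₀ := (hH t₀).symm
      _ = c := hc
      _ < ψb dbmin := hcs
  exact lt_of_not_ge fun hle => hbound.not_ge (hψbanti hle)

/-- Theorem 1(v), boundary-clearance guarantee: with
`0 ≤ d_{b,min} < d̂_b`, if the initial Hamiltonian satisfies
`H(t₀) = c < ψ_b(d_{b,min})`, then every agent maintains more than the minimum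
boundary clearance: `d_{in}(t) > d_{b,min}` for all `t ≥ t₀`, all agents `i`,
and all boundary planes `n`. -/
theorem boundary_clearance_guarantee
    (N m : ℕ) (ε : ℝ) (hε : 0 < ε)
    -- agent positions and velocities
    (q qv : Fin N → ℝ → EuclideanSpace ℝ (Fin 3))
    -- boundary planes
    (A : Fin m → EuclideanSpace ℝ (Fin 3)) (b : Fin m → ℝ)
    (hA : ∀ n, ‖A n‖ = 1)
    -- reference velocity, parallel to every boundary plane
    (vhat : EuclideanSpace ℝ (Fin 3)) (hvhat : ∀ n, ⟪A n, vhat⟫ = 0)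
    -- potential functions
    (dhat dbhat : ℝ) (ψ ψb φ φb : ℝ → ℝ)
    (hψnn : ∀ d, 0 ≤ ψ d) (hψanti : Antitone ψ)
    (hψC1 : ContDiff ℝ 1 ψ) (hφ : deriv ψ = φ)
    (hψ0 : ∀ d, ψ d = 0 ↔ dhat ≤ d) (hψpos : ∀ d, 0 < ψ d ↔ d < dhat)
    (hψbnn : ∀ d, 0 ≤ ψb d) (hψbanti : Antitone ψb)
    (hψbC1 : ContDiff ℝ 1 ψb) (hφb : deriv ψb = φb)
    (hψb0 : ∀ d, ψb d = 0 ↔ dbhat ≤ d) (hψbpos : ∀ d, 0 < ψb d ↔ d < dbhat)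
    -- damping gains
    (K : Fin N → ℝ) (hK : ∀ i, 0 < K i)
    -- closed-loop double-integrator dynamics  q̈ᵢ = uᵢ
    (hq : ∀ i t, HasDerivAt (q i) (qv i t) t)
    (hqv : ∀ i t, HasDerivAt (qv i)
      (-(∑ j ∈ univ.erase i,
          (φ ((1 / ε) * (Real.sqrt (1 + ε * ‖q i t - q j t‖ ^ 2) - 1)) *
            (Real.sqrt (1 + ε * ‖q i t - q j t‖ ^ 2))⁻¹) • (q i t - q j t))
        - (∑ n, φb (⟪A n, q i t⟫ - b n) • A n)
        - K i • (qv i t - vhat)) t)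
    -- the Hamiltonian  H = V_p + V_k + V_b
    (t₀ : ℝ) (H : ℝ → ℝ)
    (hH : ∀ t, H t =
      (1 / 2) * ∑ i, ∑ j ∈ univ.erase i,
          ψ ((1 / ε) * (Real.sqrt (1 + ε * ‖q i t - q j t‖ ^ 2) - 1))
      + (1 / 2) * ∑ i, ‖qv i t - vhat‖ ^ 2
      + ∑ i, ∑ n, ψb (⟪A n, q i t⟫ - b n))
    -- minimum boundary clearance and initial-energy sublevel condition
    (dbmin c : ℝ) (hdbmin0 : 0 ≤ dbmin) (hdbmin : dbmin < dbhat)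
    (hc : H t₀ = c) (hcs : c < ψb dbmin) :
    ∀ t, t₀ ≤ t → ∀ i : Fin N, ∀ n : Fin m, dbmin < ⟪A n, q i t⟫ - b n :=
  boundary_clearance_guarantee_general N m ε hε q qv A b vhat hvhat ψ ψb φ φb hψnn hψC1 hφ hψbnn
    hψbanti hψbC1 hφb K hK hq hqv t₀ H hH dbmin c hc hcs
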